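/- Let α, β be coprime integers with 2 ≤ β ≤ α - 2. If α is even then max{S(α,β) - 3, 0} + max{S(α,β) - ⌊α/β⌋ - 3, 0} ≤ α - 5, and if α is odd then this quantity is at most α - 4. -/
import Mathlib


/-- Sum of the partial quotients of the regular continued fraction expansion
of `p / q`, computed via the Euclidean algorithm. -/
def S (p q : ℕ) : ℕ :=
  if _h : q = 0 then 0 else p / q + S q (p % q)
termination_by q
decreasing_by exact Nat.mod_lt _ (Nat.pos_of_ne_zero _h)

lemma S_eq (p q : ℕ) (h : q ≠ 0) : S p q = p / q + S q (p % q) := by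
  rw [S]; simp [h]

lemma S_zero (p : ℕ) : S p 0 = 0 := by
  rw [S]; simp

lemma S_one (n : ℕ) : S n 1 = n := by
  rw [S_eq n 1 one_ne_zero, Nat.mod_one, S_zero, Nat.div_one]; ring

lemma cop_step {p q : ℕ} (h : Nat.Coprime p q) : Nat.Coprime q (p % q) := by
  have hg := Nat.gcd_rec q p
  unfold Nat.Coprime at *
  rw [Nat.gcd_comm] at h ⊢
  rw [← hg]
  exact h

lemma mod_pos {p q : ℕ} (h : Nat.Coprime p q) (hq : 2 ≤ q) : 1 ≤ p % q := by
  rcases Nat.eq_zero_or_pos (p % q) with h0 | h1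
  · exfalso
    have hd : q ∣ p := Nat.dvd_of_mod_eq_zero h0
    have hg : q ∣ Nat.gcd p q := Nat.dvd_gcd hd dvd_rfl
    rw [Nat.Coprime.gcd_eq_one h] at hg
    have := Nat.le_of_dvd one_pos hg
    omega
  · exact h1

lemma S_le : ∀ q p : ℕ, Nat.Coprime p q → 1 ≤ q → q ≤ p → S p q ≤ p := by
  intro q
  induction q using Nat.strong_induction_on with
  | _ q ih =>
    intro p hcop hq1 hqp
    by_cases hq : q = 1
    · subst hq; rw [S_one]
    · have hq2 : 2 ≤ q := by omega
      have hr1 : 1 ≤ p % q := mod_pos hcop hq2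
      have hrq : p % q < q := Nat.mod_lt _ (by omega)
      have hih := ih (p % q) hrq q (cop_step hcop) hr1 (le_of_lt hrq)
      have hdiv := Nat.div_add_mod p q
      have ha1 : 1 ≤ p / q := (Nat.one_le_div_iff (by omega)).mpr hqp
      rw [S_eq p q (by omega)]
      obtain ⟨a', ha'⟩ : ∃ a', p / q = a' + 1 := ⟨p / q - 1, by omega⟩
      obtain ⟨b', hb'⟩ : ∃ b', q = b' + 2 := ⟨q - 2, by omega⟩
      obtain ⟨m, hm⟩ : ∃ m, q * (p / q) = m + 2 * a' + b' + 2 :=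
        ⟨b' * a', by rw [ha', hb']; ring⟩
      rw [hm] at hdiv
      omega

lemma S_bound : ∀ q p : ℕ, Nat.Coprime p q → 2 ≤ q → q < p →
    2 * S p q ≤ p + q + 1 ∧ (p % 2 = 1 → q % 2 = 1 → 2 * S p q ≤ p + q) := by
  intro q
  induction q using Nat.strong_induction_on with
  | _ q ih =>
    intro p hcop hq2 hqp
    have hr1 : 1 ≤ p % q := mod_pos hcop hq2
    have hrq : p % q < q := Nat.mod_lt _ (by omega)
    have hrec := S_eq p q (by omega)
    have hdiv := Nat.div_add_mod p q
    have ha1 : 1 ≤ p / q := (Nat.one_le_div_iff (by omega)).mpr (le_of_lt hqp)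
    by_cases hr : p % q = 1
    · rw [hr, S_one] at hrec
      rw [hr] at hdiv
      constructor
      · obtain ⟨a', ha'⟩ : ∃ a', p / q = a' + 1 := ⟨p / q - 1, by omega⟩
        obtain ⟨b', hb'⟩ : ∃ b', q = b' + 2 := ⟨q - 2, by omega⟩
        obtain ⟨m, hm⟩ : ∃ m, q * (p / q) = m + 2 * a' + b' + 2 :=
          ⟨b' * a', by rw [ha', hb']; ring⟩
        rw [hm] at hdiv
        omega
      · intro hp2 hq2'
        have haeven : (p / q) % 2 = 0 := by
          rcases Nat.even_or_odd (p / q) with he | ho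
          · exact Nat.even_iff.mp he
          · exfalso
            have hodd : Odd (q * (p / q)) := (Nat.odd_iff.mpr hq2').mul ho
            have h1 := Nat.odd_iff.mp hodd
            generalize hT : q * (p / q) = T at hdiv h1
            omega
        obtain ⟨a', ha'⟩ : ∃ a', p / q = a' + 2 := ⟨p / q - 2, by omega⟩
        obtain ⟨b', hb'⟩ : ∃ b', q = b' + 3 := ⟨q - 3, by omega⟩
        obtain ⟨m, hm⟩ : ∃ m, q * (p / q) = m + 3 * a' + 2 * b' + 6 :=
          ⟨b' * a', by rw [ha', hb']; ring⟩
        rw [hm] at hdiv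
        omega
    · have hr2 : 2 ≤ p % q := by omega
      obtain ⟨ih1, ih2⟩ := ih (p % q) hrq q (cop_step hcop) hr2 hrq
      constructor
      · obtain ⟨a', ha'⟩ : ∃ a', p / q = a' + 1 := ⟨p / q - 1, by omega⟩
        obtain ⟨b', hb'⟩ : ∃ b', q = b' + 2 := ⟨q - 2, by omega⟩
        obtain ⟨m, hm⟩ : ∃ m, q * (p / q) = m + 2 * a' + b' + 2 :=
          ⟨b' * a', by rw [ha', hb']; ring⟩
        rw [hm] at hdiv
        rw [hrec]
        omega
      · intro hp2 hq2'
        have hb3 : 3 ≤ q := by omega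
        rcases Nat.even_or_odd (p % q) with hre | hro
        · have hre' := Nat.even_iff.mp hre
          obtain ⟨a', ha'⟩ : ∃ a', p / q = a' + 1 := ⟨p / q - 1, by omega⟩
          obtain ⟨b', hb'⟩ : ∃ b', q = b' + 3 := ⟨q - 3, by omega⟩
          obtain ⟨m, hm⟩ : ∃ m, q * (p / q) = m + 3 * a' + b' + 3 :=
            ⟨b' * a', by rw [ha', hb']; ring⟩
          rw [hm] at hdiv
          rw [hrec]
          omega
        · have hro' := Nat.odd_iff.mp hro
          have h2 := ih2 hq2' hro'
          obtain ⟨a', ha'⟩ : ∃ a', p / q = a' + 1 := ⟨p / q - 1, by omega⟩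
          obtain ⟨b', hb'⟩ : ∃ b', q = b' + 2 := ⟨q - 2, by omega⟩
          obtain ⟨m, hm⟩ : ∃ m, q * (p / q) = m + 2 * a' + b' + 2 :=
            ⟨b' * a', by rw [ha', hb']; ring⟩
          rw [hm] at hdiv
          rw [hrec]
          omega

theorem stmt_15 (α β : ℕ) (hβ : 2 ≤ β) (hβα : β ≤ α - 2) (hcop : Nat.Coprime α β) :
    (Even α → max (S α β - 3) 0 + max (S α β - α / β - 3) 0 ≤ α - 5) ∧
    (Odd α → max (S α β - 3) 0 + max (S α β - α / β - 3) 0 ≤ α - 4) := by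
  have hα : β + 2 ≤ α := by omega
  have hβ0 : β ≠ 0 := by omega
  have hrec := S_eq α β hβ0
  have hdiv := Nat.div_add_mod α β
  have hr1 : 1 ≤ α % β := mod_pos hcop hβ
  have hrβ : α % β < β := Nat.mod_lt _ (by omega)
  have ha1 : 1 ≤ α / β := (Nat.one_le_div_iff (by omega)).mpr (by omega)
  have hsle : S β (α % β) ≤ β := S_le _ β (cop_step hcop) hr1 (le_of_lt hrβ)
  have hnot : ¬(α / β = 1 ∧ α % β = 1) := by
    rintro ⟨h1, h2⟩
    rw [h1, h2] at hdiv
    omega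
  have hmax : ∀ n : ℕ, max n 0 = n := fun n => Nat.max_eq_left (Nat.zero_le n)
  rw [hmax, hmax, hrec]
  constructor
  · intro heven
    have hα2 : α % 2 = 0 := Nat.even_iff.mp heven
    have hβodd : β % 2 = 1 := by
      rcases Nat.even_or_odd β with he | ho
      · exfalso
        have h2b : 2 ∣ β := he.two_dvd
        have h2a : 2 ∣ α := heven.two_dvd
        have hg : 2 ∣ Nat.gcd α β := Nat.dvd_gcd h2a h2b
        rw [Nat.Coprime.gcd_eq_one hcop] at hg
        omega
      · exact Nat.odd_iff.mp ho
    have hβ3 : 3 ≤ β := by omega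
    have hB : (α / β + S β (α % β) + 2 ≤ α) ∧ (α / β + 2 * S β (α % β) ≤ α + 1) := by
      by_cases hrone : α % β = 1
      · have ha2 : 2 ≤ α / β := by
          rcases Nat.lt_or_ge (α / β) 2 with h | h
          · exact absurd ⟨by omega, hrone⟩ hnot
          · exact h
        have hsval : S β (α % β) = β := by rw [hrone, S_one]
        obtain ⟨a', ha'⟩ : ∃ a', α / β = a' + 2 := ⟨α / β - 2, by omega⟩
        obtain ⟨b', hb'⟩ : ∃ b', β = b' + 3 := ⟨β - 3, by omega⟩
        obtain ⟨m, hm⟩ : ∃ m, β * (α / β) = m + 3 * a' + 2 * b' + 6 :=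
          ⟨b' * a', by rw [ha', hb']; ring⟩
        rw [hm, hrone] at hdiv
        exact ⟨by omega, by omega⟩
      · have hr2 : 2 ≤ α % β := by omega
        have hLB := S_bound (α % β) β (cop_step hcop) hr2 hrβ
        by_cases haone : α / β = 1
        · have hm1 : β * (α / β) = β := by rw [haone, mul_one]
          rw [hm1] at hdiv
          have hrodd : α % β % 2 = 1 := by omega
          have h2 := hLB.2 hβodd hrodd
          exact ⟨by omega, by omega⟩
        · have ha2 : 2 ≤ α / β := by omega
          have h1 := hLB.1
          obtain ⟨a', ha'⟩ : ∃ a', α / β = a' + 2 := ⟨α / β - 2, by omega⟩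
          obtain ⟨b', hb'⟩ : ∃ b', β = b' + 3 := ⟨β - 3, by omega⟩
          obtain ⟨m, hm⟩ : ∃ m, β * (α / β) = m + 3 * a' + 2 * b' + 6 :=
            ⟨b' * a', by rw [ha', hb']; ring⟩
          rw [hm] at hdiv
          exact ⟨by omega, by omega⟩
    omega
  · intro hodd
    have hB : (α / β + S β (α % β) + 1 ≤ α) ∧ (α / β + 2 * S β (α % β) ≤ α + 2) := by
      by_cases hrone : α % β = 1
      · have ha2 : 2 ≤ α / β := by
          rcases Nat.lt_or_ge (α / β) 2 with h | h
          · exact absurd ⟨by omega, hrone⟩ hnot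
          · exact h
        have hsval : S β (α % β) = β := by rw [hrone, S_one]
        obtain ⟨a', ha'⟩ : ∃ a', α / β = a' + 2 := ⟨α / β - 2, by omega⟩
        obtain ⟨b', hb'⟩ : ∃ b', β = b' + 2 := ⟨β - 2, by omega⟩
        obtain ⟨m, hm⟩ : ∃ m, β * (α / β) = m + 2 * a' + 2 * b' + 4 :=
          ⟨b' * a', by rw [ha', hb']; ring⟩
        rw [hm, hrone] at hdiv
        exact ⟨by omega, by omega⟩
      · have hr2 : 2 ≤ α % β := by omega
        have h1 := (S_bound (α % β) β (cop_step hcop) hr2 hrβ).1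
        obtain ⟨a', ha'⟩ : ∃ a', α / β = a' + 1 := ⟨α / β - 1, by omega⟩
        obtain ⟨b', hb'⟩ : ∃ b', β = b' + 2 := ⟨β - 2, by omega⟩
        obtain ⟨m, hm⟩ : ∃ m, β * (α / β) = m + 2 * a' + b' + 2 :=
          ⟨b' * a', by rw [ha', hb']; ring⟩
        rw [hm] at hdiv
        exact ⟨by omega, by omega⟩
    omega
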